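/- Let G be a finite connected graph and W a double trace of G. Then W is a strong trace if and only if for every vertex v of G the vertex figure of v with respect to W is connected; here the vertex figure is the multigraph on the set E(v) of edges incident with v in which two (occurrences of) edges e, e' ∈ E(v) are joined whenever e and e' occur consecutively at some visit of W to v. Equivalently: W is strong if and only if for every vertex v, the equivalence relation on E(v) generated by the relation 'e and e' are consecutive at some visit of W to v' has exactly one equivalence class. -/

import Mathlib

namespace StrongTraces

open SimpleGraph Finset

/-- Cyclic successor on `Fin n`. -/
def csucc {n : ℕ} (i : Fin n) : Fin n :=
  ⟨(i.val + 1) % n, Nat.mod_lt _ (by have := i.isLt; omega)⟩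

/-- Cyclic predecessor on `Fin n`. -/
def cpred {n : ℕ} (i : Fin n) : Fin n :=
  ⟨(i.val + n - 1) % n, Nat.mod_lt _ (by have := i.isLt; omega)⟩

variable {V : Type*} [Fintype V] [DecidableEq V]

/-- A double trace of `G`: a closed walk, encoded as a cyclic sequence of `n` vertices
(read cyclically, so step `i` goes from `f i` to `f (csucc i)`), that traverses every
edge of `G` exactly twice.  (`n = 0` encodes the trivial closed walk.) -/
structure DoubleTrace (G : SimpleGraph V) where
  n : ℕ
  f : Fin n → V
  adj : ∀ i : Fin n, G.Adj (f i) (f (csucc i))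
  twice : ∀ e ∈ G.edgeSet,
    (Finset.univ.filter fun i : Fin n => s(f i, f (csucc i)) = e).card = 2

variable {G : SimpleGraph V}

/-- `W` has an `N`-repetition at `v`: at every visit of `W` to `v`, the predecessor
lies in `N` if and only if the successor lies in `N`. -/
def DoubleTrace.HasRepetition (W : DoubleTrace G) (v : V) (N : Set V) : Prop :=
  ∀ i : Fin W.n, W.f i = v → (W.f (cpred i) ∈ N ↔ W.f (csucc i) ∈ N)

/-- A strong trace: a double trace all of whose repetitions are trivial
(`N = ∅` or `N = N(v)`). -/
def DoubleTrace.IsStrong (W : DoubleTrace G) : Prop :=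
  ∀ (v : V) (N : Set V), N ⊆ G.neighborSet v → W.HasRepetition v N →
    N = ∅ ∨ N = G.neighborSet v

/-- A `d`-stable trace: a double trace with no `N`-repetition with `1 ≤ |N| ≤ d`
at any vertex. -/
def DoubleTrace.IsStable (W : DoubleTrace G) (d : ℕ) : Prop :=
  ∀ (v : V) (N : Set V), N ⊆ G.neighborSet v → 1 ≤ N.ncard → N.ncard ≤ d →
    ¬ W.HasRepetition v N

/-- The number of times `W` makes the directed step from `u` to `v`. -/
def DoubleTrace.traversalCount (W : DoubleTrace G) (u v : V) : ℕ :=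
  (Finset.univ.filter fun i : Fin W.n => W.f i = u ∧ W.f (csucc i) = v).card

/-- `W` traverses every edge once in each direction. -/
def DoubleTrace.IsAntiparallel (W : DoubleTrace G) : Prop :=
  ∀ u v : V, G.Adj u v → W.traversalCount u v = 1

/-- `W` traverses every edge twice in the same direction. -/
def DoubleTrace.IsParallel (W : DoubleTrace G) : Prop :=
  ∀ u v : V, G.Adj u v → W.traversalCount u v = 0 ∨ W.traversalCount u v = 2

/-- The adjacency relation of the vertex figure of `v` with respect to `W`:
two edges incident with `v` are related if they occur consecutively at some visit
of `W` to `v`. -/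
def DoubleTrace.VertexFigureRel (W : DoubleTrace G) (v : V) :
    G.incidenceSet v → G.incidenceSet v → Prop :=
  fun e e' => ∃ i : Fin W.n, W.f i = v ∧
    ((e.1 = s(W.f (cpred i), v) ∧ e'.1 = s(v, W.f (csucc i))) ∨
     (e'.1 = s(W.f (cpred i), v) ∧ e.1 = s(v, W.f (csucc i))))

/-- The vertex figure of `v` with respect to `W` is connected: the equivalence
relation generated by consecutiveness at visits to `v` relates any two edges
incident with `v`. -/
def DoubleTrace.VertexFigureConnected (W : DoubleTrace G) (v : V) : Prop :=
  ∀ e e' : G.incidenceSet v, Relation.EqvGen (W.VertexFigureRel v) e e'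

/-- The number of connected components of the vertex figure of `v` with respect to
`W`, i.e. the number of equivalence classes of the equivalence relation generated by
consecutiveness at visits to `v`. -/
noncomputable def DoubleTrace.vertexFigureComponents (W : DoubleTrace G) (v : V) : ℕ :=
  Nat.card (Quot (W.VertexFigureRel v))

/-- The number of edges of `H` lying in the connected component `c` of `H`. -/
noncomputable def componentEdgeCount (H : SimpleGraph V) (c : H.ConnectedComponent) : ℕ :=
  Nat.card {e : Sym2 V | e ∈ H.edgeSet ∧ ∀ x ∈ e, H.connectedComponentMk x = c}

end StrongTraces

/-!
Identify `E(v)` with `N(v)` by sending an edge to its other endpoint. Under this identification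
a set `N ⊆ N(v)` gives an `N`-repetition at `v` exactly when the corresponding set of edges is
closed under consecutiveness at the visits of `W` to `v`, i.e. is a union of components of the
vertex figure. So `W` has only trivial repetitions at `v` iff the vertex figure has no
nontrivial union of components, i.e. is connected.
-/

theorem Relation.forall_eqvGen_iff {α : Type*} {r : α → α → Prop} :
    (∀ a b, Relation.EqvGen r a b) ↔
      ∀ S : Set α, (∀ a b, r a b → (a ∈ S ↔ b ∈ S)) → S = ∅ ∨ S = Set.univ := by
  constructor
  · intro h S hS
    have hinv : ∀ a b, Relation.EqvGen r a b → (a ∈ S ↔ b ∈ S) :=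
      Relation.EqvGen.eqvGen_le (r' := fun a b => (a ∈ S ↔ b ∈ S)) hS
    refine S.eq_empty_or_nonempty.imp_right fun ⟨a, ha⟩ => ?_
    exact Set.eq_univ_of_forall fun b => (hinv a b (h a b)).1 ha
  · intro h a b
    have hclosed : ∀ x y, r x y →
        (x ∈ {c | Relation.EqvGen r a c} ↔ y ∈ {c | Relation.EqvGen r a c}) :=
      fun x y hxy => ⟨fun hx => hx.trans _ _ _ (.rel _ _ hxy),
        fun hy => hy.trans _ _ _ (.symm _ _ (.rel _ _ hxy))⟩
    rcases h _ hclosed with hempty | huniv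
    · exact absurd (Relation.EqvGen.refl a) (Set.eq_empty_iff_forall_notMem.1 hempty a)
    · exact Set.eq_univ_iff_forall.1 huniv b

theorem Function.Injective.forall_subset_range_iff {α β : Type*} {g : α → β}
    (hg : Function.Injective g) {P : Set α → Prop} :
    (∀ N ⊆ Set.range g, P (g ⁻¹' N) → N = ∅ ∨ N = Set.range g) ↔
      ∀ S, P S → S = ∅ ∨ S = Set.univ := by
  constructor
  · intro h S hS
    rcases h (g '' S) (Set.image_subset_range g S) (by rwa [Set.preimage_image_eq S hg])
      with hempty | hrange
    · exact .inl (Set.image_eq_empty.1 hempty)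
    · right
      rw [← Set.preimage_image_eq S hg, hrange, Set.preimage_range]
  · intro h N hN hP
    rw [← Set.image_preimage_eq_of_subset hN]
    rcases h _ hP with hempty | huniv
    · exact .inl (by rw [hempty, Set.image_empty])
    · exact .inr (by rw [huniv, Set.image_univ])

theorem SimpleGraph.otherVertexOfIncident_eq_iff {V : Type*} [DecidableEq V]
    {G : SimpleGraph V} {v u : V} {e : Sym2 V} (h : e ∈ G.incidenceSet v) :
    G.otherVertexOfIncident h = u ↔ e = s(v, u) :=
  Sym2.congr_right.symm.trans (by rw [otherVertexOfIncident, Sym2.other_spec'])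

theorem SimpleGraph.injective_otherVertexOfIncident {V : Type*} [DecidableEq V]
    (G : SimpleGraph V) (v : V) :
    Function.Injective fun e : G.incidenceSet v => G.otherVertexOfIncident e.2 :=
  Subtype.val_injective.comp (G.incidenceSetEquivNeighborSet v).injective

theorem SimpleGraph.range_otherVertexOfIncident {V : Type*} [DecidableEq V]
    (G : SimpleGraph V) (v : V) :
    Set.range (fun e : G.incidenceSet v => G.otherVertexOfIncident e.2) = G.neighborSet v := by
  change Set.range (Subtype.val ∘ G.incidenceSetEquivNeighborSet v) = _
  rw [Set.range_comp, (G.incidenceSetEquivNeighborSet v).range_eq_univ, Set.image_univ,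
    Subtype.range_coe]

namespace StrongTraces

theorem csucc_cpred {n : ℕ} (i : Fin n) : csucc (cpred i) = i := by
  have hn : 0 < n := i.pos
  apply Fin.ext
  show ((i.val + n - 1) % n + 1) % n = i.val
  rw [Nat.mod_add_mod, show i.val + n - 1 + 1 = i.val + n by omega, Nat.add_mod_right,
    Nat.mod_eq_of_lt i.isLt]

variable {V : Type*} [DecidableEq V] {G : SimpleGraph V}

namespace DoubleTrace

theorem adj_cpred (W : DoubleTrace G) (i : Fin W.n) : G.Adj (W.f (cpred i)) (W.f i) := by
  simpa only [csucc_cpred] using W.adj (cpred i)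

theorem hasRepetition_iff (W : DoubleTrace G) (v : V) (N : Set V) :
    W.HasRepetition v N ↔
      ∀ e e', W.VertexFigureRel v e e' →
        (e ∈ (fun e => G.otherVertexOfIncident e.2) ⁻¹' N ↔
          e' ∈ (fun e => G.otherVertexOfIncident e.2) ⁻¹' N) := by
  simp only [Set.mem_preimage]
  constructor
  · rintro hrep e e' ⟨i, hi, ⟨he, he'⟩ | ⟨he', he⟩⟩
    · rw [(G.otherVertexOfIncident_eq_iff e.2).2 (he.trans Sym2.eq_swap),
        (G.otherVertexOfIncident_eq_iff e'.2).2 he']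
      exact hrep i hi
    · rw [(G.otherVertexOfIncident_eq_iff e.2).2 he,
        (G.otherVertexOfIncident_eq_iff e'.2).2 (he'.trans Sym2.eq_swap)]
      exact (hrep i hi).symm
  · intro hclosed i hi
    let e : G.incidenceSet v :=
      ⟨s(W.f (cpred i), v), G.mk'_mem_incidenceSet_right_iff.2 (hi ▸ W.adj_cpred i)⟩
    let e' : G.incidenceSet v :=
      ⟨s(v, W.f (csucc i)), G.mk'_mem_incidenceSet_left_iff.2 (hi ▸ W.adj i)⟩
    have hpred : G.otherVertexOfIncident e.2 = W.f (cpred i) :=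
      (G.otherVertexOfIncident_eq_iff e.2).2 Sym2.eq_swap
    have hsucc : G.otherVertexOfIncident e'.2 = W.f (csucc i) :=
      (G.otherVertexOfIncident_eq_iff e'.2).2 rfl
    rw [← hpred, ← hsucc]
    exact hclosed e e' ⟨i, hi, .inl ⟨rfl, rfl⟩⟩

theorem forall_hasRepetition_iff_vertexFigureConnected (W : DoubleTrace G) (v : V) :
    (∀ N ⊆ G.neighborSet v, W.HasRepetition v N → N = ∅ ∨ N = G.neighborSet v) ↔
      W.VertexFigureConnected v := by
  rw [VertexFigureConnected, Relation.forall_eqvGen_iff,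
    ← (G.injective_otherVertexOfIncident v).forall_subset_range_iff,
    G.range_otherVertexOfIncident]
  simp only [hasRepetition_iff]

end DoubleTrace

theorem isStrong_iff_vertexFigures_connected_general {V : Type*} [DecidableEq V]
    {G : SimpleGraph V} (W : DoubleTrace G) :
    W.IsStrong ↔ ∀ v : V, W.VertexFigureConnected v :=
  forall_congr' W.forall_hasRepetition_iff_vertexFigureConnected

/-- A double trace of a finite connected graph is strong if and only
if all of its vertex figures are connected. -/
theorem isStrong_iff_vertexFigures_connected {V : Type*} [Fintype V] [DecidableEq V]
    {G : SimpleGraph V} (hconn : G.Connected) (W : DoubleTrace G) :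
    W.IsStrong ↔ ∀ v : V, W.VertexFigureConnected v :=
  isStrong_iff_vertexFigures_connected_general W

end StrongTraces
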